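/- arXiv:1902.07263 — 4 statements merged into one kernel-verified Lean document; each statement's English description precedes it below -/
import Mathlib

section
/- Let T be an N×N Markov matrix with all entries bounded below by δ > 0 and stationary distribution π. Then T is a strict contraction on L²_0(π) = {v ∈ ℝ^N : Σ_i π_i v_i = 0}, with operator norm at most 1 - Nδ/2. Consequently, for any b ∈ L²_0(π) and ε > 0, the fixed-point equation Φ = T Φ + ε b has a unique solution Φ ∈ L²_0(π). -/
/-!
Write `T = δ J + S` with `J` the all-ones matrix: `S` is nonnegative with row sums `1 - Nδ`, and
`T v` differs from `S v` by a constant. Since `T v` has `π`-mean zero, subtracting that constant can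
only increase its `L²(π)` norm, and Cauchy–Schwarz on the rows of `S` followed by stationarity gives
`‖T v‖² ≤ (1 - Nδ) ‖v‖² ≤ (1 - Nδ/2)² ‖v‖²`. As `π ≥ δ > 0`, `T` then has no nonzero fixed point in
`L²₀(π)`, a finite-dimensional space that `T` preserves, so `1 - T` is bijective on it.
-/

open Finset Matrix

section WeightedSums

variable {ι : Type*} [Fintype ι]

theorem sum_mul_sq_le_sum_mul_sub_sq {p x : ι → ℝ} (hp : ∑ i, p i = 1)
    (hpx : ∑ i, p i * x i = 0) (c : ℝ) :
    ∑ i, p i * x i ^ 2 ≤ ∑ i, p i * (x i - c) ^ 2 :=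
  calc ∑ i, p i * x i ^ 2
      ≤ ∑ i, p i * x i ^ 2 + c ^ 2 := le_add_of_nonneg_right (sq_nonneg c)
    _ = ∑ i, (p i * x i ^ 2 - 2 * c * (p i * x i) + c ^ 2 * p i) := by
      rw [sum_add_distrib, sum_sub_distrib, ← mul_sum, ← mul_sum, hp, hpx]
      ring
    _ = ∑ i, p i * (x i - c) ^ 2 := sum_congr rfl fun i _ => by ring

theorem sq_sum_sub_mul_le {t v : ι → ℝ} {δ : ℝ} (hδ : 0 ≤ δ) (ht : ∀ j, δ ≤ t j)
    (ht1 : ∑ j, t j = 1) :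
    (∑ j, (t j - δ) * v j) ^ 2 ≤ (1 - Fintype.card ι * δ) * ∑ j, t j * v j ^ 2 := by
  have hw : ∀ j, 0 ≤ t j - δ := fun j => sub_nonneg.2 (ht j)
  have hsum : ∑ j, (t j - δ) = 1 - Fintype.card ι * δ := by
    rw [sum_sub_distrib, ht1, sum_const, card_univ, nsmul_eq_mul]
  calc (∑ j, (t j - δ) * v j) ^ 2
      ≤ (∑ j, (t j - δ)) * ∑ j, (t j - δ) * v j ^ 2 :=
        sum_sq_le_sum_mul_sum_of_sq_le_mul _ (fun j _ => hw j)
          (fun j _ => mul_nonneg (hw j) (sq_nonneg _)) (fun j _ => (by ring : _ = _).le)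
    _ ≤ (∑ j, (t j - δ)) * ∑ j, t j * v j ^ 2 :=
        mul_le_mul_of_nonneg_left
          (sum_le_sum fun j _ => mul_le_mul_of_nonneg_right (sub_le_self _ hδ) (sq_nonneg _))
          (sum_nonneg fun j _ => hw j)
    _ = (1 - Fintype.card ι * δ) * ∑ j, t j * v j ^ 2 := by rw [hsum]

end WeightedSums

namespace Matrix

variable {ι : Type*} [Fintype ι] {T : Matrix ι ι ℝ} {π : ι → ℝ} {δ : ℝ}

theorem dotProduct_mulVec_of_vecMul_eq (hstat : π ᵥ* T = π) (x : ι → ℝ) :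
    π ⬝ᵥ (T *ᵥ x) = π ⬝ᵥ x := by
  rw [dotProduct_mulVec, hstat]

theorem le_vecMul_apply (hT : ∀ i j, δ ≤ T i j) (hπ0 : ∀ i, 0 ≤ π i) (hπ1 : ∑ i, π i = 1)
    (j : ι) : δ ≤ (π ᵥ* T) j :=
  calc δ = ∑ i, π i * δ := by rw [← sum_mul, hπ1, one_mul]
    _ ≤ ∑ i, π i * T i j := sum_le_sum fun i _ => mul_le_mul_of_nonneg_left (hT i j) (hπ0 i)

theorem sum_mul_mulVec_sq_le (hδ : 0 ≤ δ) (hT : ∀ i j, δ ≤ T i j) (hrow : ∀ i, ∑ j, T i j = 1)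
    (hπ0 : ∀ i, 0 ≤ π i) (hπ1 : ∑ i, π i = 1) (hstat : π ᵥ* T = π) {v : ι → ℝ}
    (hv : π ⬝ᵥ v = 0) :
    ∑ i, π i * (T *ᵥ v) i ^ 2 ≤ (1 - Fintype.card ι * δ) * ∑ i, π i * v i ^ 2 := by
  have hmean : ∑ i, π i * (T *ᵥ v) i = 0 := (dotProduct_mulVec_of_vecMul_eq hstat v).trans hv
  have hshift : ∀ i, (T *ᵥ v) i - δ * ∑ j, v j = ∑ j, (T i j - δ) * v j := fun i => by
    simp only [mulVec, dotProduct, sub_mul, sum_sub_distrib, mul_sum]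
  calc ∑ i, π i * (T *ᵥ v) i ^ 2
      ≤ ∑ i, π i * ((T *ᵥ v) i - δ * ∑ j, v j) ^ 2 := sum_mul_sq_le_sum_mul_sub_sq hπ1 hmean _
    _ ≤ ∑ i, π i * ((1 - Fintype.card ι * δ) * (T *ᵥ fun j => v j ^ 2) i) :=
        sum_le_sum fun i _ => by
          rw [hshift]
          exact mul_le_mul_of_nonneg_left (sq_sum_sub_mul_le hδ (hT i) (hrow i)) (hπ0 i)
    _ = (1 - Fintype.card ι * δ) * π ⬝ᵥ (T *ᵥ fun j => v j ^ 2) := by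
        simp only [mul_left_comm (π _), ← mul_sum, dotProduct]
    _ = (1 - Fintype.card ι * δ) * ∑ i, π i * v i ^ 2 := by
        rw [dotProduct_mulVec_of_vecMul_eq hstat, dotProduct]

theorem eq_zero_of_mulVec_eq_self (hδ : 0 < δ) (hT : ∀ i j, δ ≤ T i j)
    (hrow : ∀ i, ∑ j, T i j = 1) (hπ0 : ∀ i, 0 ≤ π i) (hπ1 : ∑ i, π i = 1)
    (hstat : π ᵥ* T = π) {w : ι → ℝ} (hw : π ⬝ᵥ w = 0) (hfix : T *ᵥ w = w) : w = 0 := by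
  have hcontr := sum_mul_mulVec_sq_le hδ.le hT hrow hπ0 hπ1 hstat hw
  rw [hfix] at hcontr
  have hterm : ∀ i ∈ univ, 0 ≤ π i * w i ^ 2 := fun i _ => mul_nonneg (hπ0 i) (sq_nonneg _)
  funext j
  have hNδ : 0 < Fintype.card ι * δ :=
    mul_pos (Nat.cast_pos.2 (Fintype.card_pos_iff.2 ⟨j⟩)) hδ
  have hQ : ∑ i, π i * w i ^ 2 = 0 := le_antisymm (by nlinarith) (sum_nonneg hterm)
  have hπj : 0 < π j := hδ.trans_le (hstat ▸ le_vecMul_apply hT hπ0 hπ1 j)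
  simpa [hπj.ne'] using (sum_eq_zero_iff_of_nonneg hterm).1 hQ j (mem_univ j)

end Matrix

theorem LinearMap.existsUnique_mem_ker_eq_add {K V : Type*} [Field K] [AddCommGroup V]
    [Module K V] [FiniteDimensional K V] (f : V →ₗ[K] V) (φ : V →ₗ[K] K)
    (hφ : ∀ x, φ (f x) = φ x) (hfix : ∀ w, φ w = 0 → f w = w → w = 0) {b : V}
    (hb : φ b = 0) : ∃! x, φ x = 0 ∧ x = f x + b := by
  have hW : ∀ x ∈ ker φ, (1 - f) x ∈ ker φ := fun x hx => by
    simp_all [mem_ker]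
  have hinj : Function.Injective ((1 - f).restrict hW) := by
    rw [injective_iff_map_eq_zero]
    rintro ⟨x, hx⟩ h
    have h' : x - f x = 0 := congrArg Subtype.val h
    exact Subtype.ext (hfix x hx (sub_eq_zero.1 h').symm)
  obtain ⟨⟨x, hx⟩, hxb⟩ := injective_iff_surjective.1 hinj ⟨b, hb⟩
  have hxb' : x - f x = b := congrArg Subtype.val hxb
  refine ⟨x, ⟨hx, by rw [← hxb']; abel⟩, fun y ⟨hy, hyb⟩ => ?_⟩
  have hxy : y - f y = x - f x := (sub_eq_of_eq_add' hyb).trans hxb'.symm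
  refine sub_eq_zero.1 (hfix (y - x) (by simp [hy, mem_ker.1 hx]) ?_)
  rw [map_sub]
  exact (sub_eq_sub_iff_sub_eq_sub.1 hxy).symm

theorem markov_matrix_contraction_unique_fixed_point_general
    (N : ℕ) (T : Matrix (Fin N) (Fin N) ℝ) (π : Fin N → ℝ)
    (δ : ℝ) (hδ : 0 < δ) (hTδ : ∀ i j, δ ≤ T i j)
    (hrow : ∀ i, ∑ j, T i j = 1)
    (hπ0 : ∀ i, 0 ≤ π i) (hπ1 : ∑ i, π i = 1)
    (hstat : ∀ j, ∑ i, π i * T i j = π j)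
    (b : Fin N → ℝ) (hb : ∑ i, π i * b i = 0) (ε : ℝ) :
    (∀ v : Fin N → ℝ, ∑ i, π i * v i = 0 →
      ∑ i, π i * (∑ j, T i j * v j) ^ 2 ≤ (1 - N * δ / 2) ^ 2 * ∑ i, π i * (v i) ^ 2) ∧
    (∃! Φ : Fin N → ℝ, (∑ i, π i * Φ i = 0) ∧
      ∀ i, Φ i = (∑ j, T i j * Φ j) + ε * b i) := by
  have hstat' : π ᵥ* T = π := funext hstat
  refine ⟨fun v hv => ?_, ?_⟩
  · have hcontr := sum_mul_mulVec_sq_le hδ.le hTδ hrow hπ0 hπ1 hstat' hv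
    rw [Fintype.card_fin] at hcontr
    refine hcontr.trans (mul_le_mul_of_nonneg_right ?_ ?_)
    · nlinarith [sq_nonneg ((N : ℝ) * δ)]
    · exact sum_nonneg fun i _ => mul_nonneg (hπ0 i) (sq_nonneg _)
  · have hεb : dotProductBilin ℝ ℝ π (ε • b) = 0 := by simp [show π ⬝ᵥ b = 0 from hb]
    refine (existsUnique_congr fun Φ => ?_).1 <|
      T.mulVecLin.existsUnique_mem_ker_eq_add (dotProductBilin ℝ ℝ π)
        (dotProduct_mulVec_of_vecMul_eq hstat')
        (fun w hw hfix => eq_zero_of_mulVec_eq_self hδ hTδ hrow hπ0 hπ1 hstat' hw hfix) hεb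
    simp [funext_iff, mulVec, dotProduct]

/-- an `N × N` Markov matrix `T` with all entries bounded below by
`δ > 0` and stationary distribution `π` is a strict contraction on
`L²₀(π) = {v : Σ_i π_i v_i = 0}`, with operator norm at most `1 - Nδ/2`.
Consequently, for any `b ∈ L²₀(π)` and `ε > 0`, the fixed-point equation
`Φ = TΦ + εb` has a unique solution `Φ ∈ L²₀(π)`. -/
theorem markov_matrix_contraction_unique_fixed_point
    (N : ℕ) (hN : 0 < N) (T : Matrix (Fin N) (Fin N) ℝ) (π : Fin N → ℝ)
    (δ : ℝ) (hδ : 0 < δ) (hTδ : ∀ i j, δ ≤ T i j)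
    (hrow : ∀ i, ∑ j, T i j = 1)
    (hπ0 : ∀ i, 0 ≤ π i) (hπ1 : ∑ i, π i = 1)
    (hstat : ∀ j, ∑ i, π i * T i j = π j)
    (b : Fin N → ℝ) (hb : ∑ i, π i * b i = 0) (ε : ℝ) (hε : 0 < ε) :
    (∀ v : Fin N → ℝ, ∑ i, π i * v i = 0 →
      ∑ i, π i * (∑ j, T i j * v j) ^ 2 ≤ (1 - N * δ / 2) ^ 2 * ∑ i, π i * (v i) ^ 2) ∧
    (∃! Φ : Fin N → ℝ, (∑ i, π i * Φ i = 0) ∧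
      ∀ i, Φ i = (∑ j, T i j * Φ j) + ε * b i) :=
  markov_matrix_contraction_unique_fixed_point_general N T π δ hδ hTδ hrow hπ0 hπ1 hstat b hb ε
end

section
/- Let B^x be standard d-dimensional Brownian motion started at x and α, β, ε > 0, n ∈ ℕ. Then E[ e^{-ε Σ_{k=0}^{m-1} (α |B^x_{2kε}|² - β)} ] = e^{-α_m |x|² + β_m} for all m = 1,…,n, where the sequences are given by the recursions α_{m+1} = αε + α_m/(1 + 4ε α_m), α_1 = αε, and β_{m+1} = β_m + βε - (d/2) log(1 + 4ε α_m) (with β interpreted per coordinate), β_1 = βε. -/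
open MeasureTheory ProbabilityTheory Finset

noncomputable section

variable {d : ℕ} {Ω : Type*}

/-- A one-dimensional (pre-)Brownian motion started at `0`. -/
def IsPreBM [MeasurableSpace Ω] (μ : Measure Ω) (B : ℝ → Ω → ℝ) : Prop :=
  (∀ᵐ ω ∂μ, B 0 ω = 0) ∧
  (∀ᵐ ω ∂μ, Continuous fun t => B t ω) ∧
  (∀ s t : ℝ, 0 ≤ s → s ≤ t →
    Measure.map (fun ω => B t ω - B s ω) μ = gaussianReal 0 (Real.toNNReal (t - s))) ∧
  (∀ (n : ℕ) (ts : ℕ → ℝ), Monotone ts → (∀ i, 0 ≤ ts i) →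
    iIndepFun (β := fun _ : Fin n => ℝ)
      (fun i : Fin n => fun ω => B (ts (i + 1)) ω - B (ts i) ω) μ)

/-- A `d`-dimensional standard Brownian motion started at `0`. -/
def IsBM [MeasurableSpace Ω] (μ : Measure Ω)
    (B : ℝ → Ω → EuclideanSpace ℝ (Fin d)) : Prop :=
  (∀ i : Fin d, IsPreBM μ (fun t ω => B t ω i)) ∧
  iIndepFun (β := fun _ : Fin d => ℝ → ℝ)
    (fun (i : Fin d) (ω : Ω) => fun t : ℝ => B t ω i) μ

/-- The sequence `α_m`: `α₁ = αε`, `α_{m+1} = αε + α_m/(1 + 4εα_m)` (with `α₀ = 0`). -/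
def alphaSeq (α ε : ℝ) : ℕ → ℝ
  | 0 => 0
  | m + 1 => α * ε + alphaSeq α ε m / (1 + 4 * ε * alphaSeq α ε m)

/-- The sequence `β_m`: `β₁ = βε`,
`β_{m+1} = β_m + βε - (d/2) log(1 + 4εα_m)` (with `β₀ = 0`). -/
def betaSeq (d : ℕ) (α β ε : ℝ) : ℕ → ℝ
  | 0 => 0
  | m + 1 => betaSeq d α β ε m + β * ε
      - ((d : ℝ) / 2) * Real.log (1 + 4 * ε * alphaSeq α ε m)

/-!
Along the grid `2kε` we have `B(2kε) = Δ₀ + ⋯ + Δ_{k-1}` with increments that are independent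
centred Gaussians of variance `2ε`, independent across coordinates as well, so the expectation
factorises over the `d` coordinates into the one-dimensional quantity
`E exp(-αε ∑_{k<m} (y + Δ₀ + ⋯ + Δ_{k-1})²)`. Conditioning on `Δ₀`, the remaining `m` steps start
from `y + Δ₀` and give `exp(-α_m (y + Δ₀)² + β_m)` by induction; the Gaussian integral over `Δ₀`,
`E exp(-a (y + Z)²) = (1 + 2av)^{-1/2} exp(-a y² / (1 + 2av))` for `Z ~ N(0, v)`, produces the
recursions for `α_{m+1}` and `β_{m+1}`.
-/

open scoped NNReal
open Real

lemma integral_exp_neg_mul_add_sq_gaussianReal {a : ℝ} {v : ℝ≥0} (hv : v ≠ 0)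
    (ha : 0 < 1 + 2 * a * v) (y : ℝ) :
    ∫ z, exp (-a * (y + z) ^ 2) ∂gaussianReal 0 v
      = exp (-(a / (1 + 2 * a * v)) * y ^ 2 - log (1 + 2 * a * v) / 2) := by
  have hv' : (0 : ℝ) < v := by positivity
  set c : ℝ := (1 + 2 * a * v) / (2 * v) with hc_def
  have hc : 0 < c := by positivity
  have ha' : 1 + 2 * (v : ℝ) * a ≠ 0 := by linarith
  have hcomplete_sq : ∀ z, gaussianPDFReal 0 v z • exp (-a * (y + z) ^ 2)
      = (√(2 * π * v))⁻¹ * exp (-(a / (1 + 2 * a * v)) * y ^ 2)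
        * exp (-c * (z + a * y / c) ^ 2) := by
    intro z
    rw [gaussianPDFReal_def, smul_eq_mul, mul_assoc, ← exp_add, mul_assoc _ (rexp _), ← exp_add,
      hc_def]
    congr 2
    field_simp
    ring
  have hnorm : (√(2 * π * v))⁻¹ * √(π / c) = exp (-(log (1 + 2 * a * v) / 2)) := by
    rw [inv_mul_eq_div, ← sqrt_div' _ (by positivity), sqrt_eq_rpow,
      rpow_def_of_pos (by positivity),
      show π / c / (2 * π * v) = (1 + 2 * a * v)⁻¹ by rw [hc_def]; field_simp, log_inv]
    ring_nf
  rw [integral_gaussianReal_eq_integral_smul hv, integral_congr_ae (.of_forall hcomplete_sq),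
    integral_const_mul, integral_add_right_eq_self (fun z => exp (-c * z ^ 2)),
    integral_gaussian, mul_right_comm, hnorm, ← exp_add]
  ring_nf

/-- `walkSqSum m y z = ∑_{k<m} (y + z₀ + ⋯ + z_{k-1})²`. -/
def walkSqSum : (m : ℕ) → ℝ → (Fin m → ℝ) → ℝ
  | 0, _, _ => 0
  | m + 1, y, z => y ^ 2 + walkSqSum m (y + z 0) (Fin.tail z)

@[simp]
lemma walkSqSum_cons (m : ℕ) (y z₀ : ℝ) (z : Fin m → ℝ) :
    walkSqSum (m + 1) y (Fin.cons z₀ z) = y ^ 2 + walkSqSum m (y + z₀) z := by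
  simp [walkSqSum]

lemma walkSqSum_increments (m : ℕ) (y : ℝ) (w : ℕ → ℝ) :
    walkSqSum m (y + w 0) (fun k : Fin m => w (k + 1) - w k) = ∑ k ∈ range m, (y + w k) ^ 2 := by
  induction m generalizing w with
  | zero => rfl
  | succ m ih =>
    rw [sum_range_succ', ← ih (fun k => w (k + 1)), walkSqSum, add_comm]
    congr 2
    simp

lemma walkSqSum_nonneg (m : ℕ) (y : ℝ) (z : Fin m → ℝ) : 0 ≤ walkSqSum m y z := by
  induction m generalizing y with
  | zero => exact le_rfl
  | succ m ih => exact add_nonneg (sq_nonneg y) (ih _ _)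

lemma measurable_walkSqSum (m : ℕ) :
    Measurable fun p : ℝ × (Fin m → ℝ) => walkSqSum m p.1 p.2 := by
  induction m with
  | zero => exact measurable_const
  | succ m ih =>
    exact (measurable_fst.pow_const 2).add
      (ih.comp ((measurable_fst.add ((measurable_pi_apply 0).comp measurable_snd)).prodMk
        (measurable_pi_lambda _ fun i : Fin m => (measurable_pi_apply i.succ).comp measurable_snd)))

lemma alphaSeq_nonneg {α ε : ℝ} (hα : 0 ≤ α) (hε : 0 ≤ ε) (m : ℕ) : 0 ≤ alphaSeq α ε m := by
  induction m with
  | zero => exact le_rfl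
  | succ m ih => rw [alphaSeq]; positivity

lemma betaSeq_eq (d : ℕ) (α β ε : ℝ) (m : ℕ) :
    betaSeq d α β ε m = β * ε * m + d * betaSeq 1 α 0 ε m := by
  induction m with
  | zero => simp [betaSeq]
  | succ m ih => rw [betaSeq, betaSeq, ih]; push_cast; ring

lemma integral_exp_neg_walkSqSum_gaussianReal {α ε : ℝ} (hα : 0 ≤ α) (hε : 0 < ε) (m : ℕ)
    (y : ℝ) :
    ∫ z, exp (-(α * ε) * walkSqSum m y z)
        ∂(Measure.pi fun _ : Fin m => gaussianReal 0 (2 * ε).toNNReal)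
      = exp (-alphaSeq α ε m * y ^ 2 + betaSeq 1 α 0 ε m) := by
  induction m generalizing y with
  | zero => simp [walkSqSum, alphaSeq, betaSeq]
  | succ m ih =>
    set ν := gaussianReal 0 (2 * ε).toNNReal
    have hv : (2 * ε).toNNReal ≠ 0 := by simpa using hε
    have hv' : ((2 * ε).toNNReal : ℝ) = 2 * ε := Real.coe_toNNReal _ (by positivity)
    have ha : 0 < 1 + 2 * alphaSeq α ε m * (2 * ε).toNNReal := by
      rw [hv']; have := alphaSeq_nonneg hα hε.le m; positivity
    have hint : Integrable (fun p : ℝ × (Fin m → ℝ) => exp (-(α * ε) * walkSqSum m (y + p.1) p.2))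
        (ν.prod (Measure.pi fun _ => ν)) := by
      have hmeas : Measurable fun p : ℝ × (Fin m → ℝ) => walkSqSum m (y + p.1) p.2 :=
        (measurable_walkSqSum m).comp
        ((measurable_const.add measurable_fst).prodMk measurable_snd)
      refine .of_bound ((hmeas.const_mul _).exp.aestronglyMeasurable) 1 (.of_forall fun p => ?_)
      rw [norm_of_nonneg (exp_nonneg _), exp_le_one_iff]
      have := walkSqSum_nonneg m (y + p.1) p.2
      have : 0 ≤ α * ε := by positivity
      nlinarith
    rw [← (measurePreserving_piFinSuccAbove (fun _ => ν) 0).symm.integral_comp']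
    simp only [MeasurableEquiv.piFinSuccAbove_symm_apply, Fin.insertNthEquiv, Equiv.coe_fn_mk,
      Fin.insertNth_zero, cast_eq, walkSqSum_cons, mul_add, exp_add]
    rw [integral_const_mul, integral_prod _ hint]
    simp only [ih, exp_add]
    rw [integral_mul_const, integral_exp_neg_mul_add_sq_gaussianReal hv ha, hv',
      show 2 * alphaSeq α ε m * (2 * ε) = 4 * ε * alphaSeq α ε m by ring, alphaSeq, betaSeq,
      ← exp_add, ← exp_add, ← exp_add]
    congr 1
    push_cast
    ring

lemma sum_norm_add_sq_eq_sum_walkSqSum {ι : Type*} [Fintype ι] (x : EuclideanSpace ℝ ι)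
    (b : ℕ → EuclideanSpace ℝ ι) (hb : b 0 = 0) (m : ℕ) :
    ∑ k ∈ range m, ‖x + b k‖ ^ 2
      = ∑ i, walkSqSum m (x i) (fun k : Fin m => b (k + 1) i - b k i) := by
  simp_rw [EuclideanSpace.real_norm_sq_eq]
  rw [sum_comm]
  refine sum_congr rfl fun i _ => ?_
  simpa [hb] using (walkSqSum_increments m (x i) fun k => b k i).symm

section BrownianMotion

variable [MeasurableSpace Ω] {μ : Measure Ω}

lemma IsPreBM.aemeasurable_sub {B : ℝ → Ω → ℝ} (hB : IsPreBM μ B) {s t : ℝ} (hs : 0 ≤ s)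
    (hst : s ≤ t) : AEMeasurable (fun ω => B t ω - B s ω) μ := by
  by_contra h
  have hlaw := hB.2.2.1 s t hs hst
  rw [Measure.map_of_not_aemeasurable h] at hlaw
  exact IsProbabilityMeasure.ne_zero _ hlaw.symm

lemma IsPreBM.map_increments {B : ℝ → Ω → ℝ} (hB : IsPreBM μ B) {ts : ℕ → ℝ} (hts : Monotone ts)
    (hts0 : ∀ k, 0 ≤ ts k) (m : ℕ) :
    μ.map (fun ω (k : Fin m) => B (ts (k + 1)) ω - B (ts k) ω)
      = Measure.pi fun k : Fin m => gaussianReal 0 (ts (k + 1) - ts k).toNNReal := by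
  rw [(hB.2.2.2 m ts hts hts0).map_fun_eq_pi_map
    fun k : Fin m => hB.aemeasurable_sub (hts0 k) (hts (Nat.le_succ k))]
  congr with k : 1
  exact hB.2.2.1 _ _ (hts0 k) (hts (Nat.le_succ k))

lemma IsBM.ae_eq_zero {B : ℝ → Ω → EuclideanSpace ℝ (Fin d)} (hB : IsBM μ B) :
    ∀ᵐ ω ∂μ, B 0 ω = 0 := by
  filter_upwards [ae_all_iff.2 fun i => (hB.1 i).1] with ω hω
  ext i
  exact hω i

lemma IsBM.integral_prod_increments {B : ℝ → Ω → EuclideanSpace ℝ (Fin d)} (hB : IsBM μ B)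
    {ts : ℕ → ℝ} (hts : Monotone ts) (hts0 : ∀ k, 0 ≤ ts k) {m : ℕ}
    (f : Fin d → (Fin m → ℝ) → ℝ) (hf : ∀ i, Measurable (f i)) :
    ∫ ω, ∏ i, f i (fun k : Fin m => B (ts (k + 1)) ω i - B (ts k) ω i) ∂μ
      = ∏ i, ∫ z, f i z
          ∂(Measure.pi fun k : Fin m => gaussianReal 0 (ts (k + 1) - ts k).toNNReal) := by
  have hmeas : ∀ i, AEMeasurable (fun ω (k : Fin m) => B (ts (k + 1)) ω i - B (ts k) ω i) μ :=
    fun i => aemeasurable_pi_lambda _ fun k =>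
      (hB.1 i).aemeasurable_sub (hts0 k) (hts (Nat.le_succ k))
  have hindep : iIndepFun (fun i ω (k : Fin m) => B (ts (k + 1)) ω i - B (ts k) ω i) μ :=
    hB.2.comp (fun _ (w : ℝ → ℝ) (k : Fin m) => w (ts (k + 1)) - w (ts k)) fun _ => by fun_prop
  rw [hindep.integral_fun_prod_comp hmeas fun i => (hf i).aestronglyMeasurable]
  congr with i
  rw [← (hB.1 i).map_increments hts hts0 m, integral_map (hmeas i) (hf i).aestronglyMeasurable]

end BrownianMotion

theorem gaussian_expectation_recursion_general
    [MeasurableSpace Ω] (μ : Measure Ω)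
    (B : ℝ → Ω → EuclideanSpace ℝ (Fin d)) (hB : IsBM μ B)
    (x : EuclideanSpace ℝ (Fin d)) (α β ε : ℝ)
    (hα : 0 < α) (hε : 0 < ε) (n : ℕ) :
    ∀ m : ℕ, 1 ≤ m → m ≤ n →
      ∫ ω, Real.exp (-(ε * ∑ k ∈ Finset.range m,
          (α * ‖x + B (2 * (k : ℝ) * ε) ω‖ ^ 2 - β))) ∂μ
        = Real.exp (-(alphaSeq α ε m) * ‖x‖ ^ 2 + betaSeq d α β ε m) := by
  intro m _ _
  obtain ⟨ts, hts_def⟩ : ∃ ts : ℕ → ℝ, ∀ k : ℕ, ts k = 2 * k * ε := ⟨_, fun _ => rfl⟩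
  have hts : Monotone ts := fun a b hab => by simp only [hts_def]; gcongr
  have hts0 : ∀ k, 0 ≤ ts k := fun k => by rw [hts_def]; positivity
  have hstep : ∀ k : ℕ, (ts (k + 1) - ts k).toNNReal = (2 * ε).toNNReal := fun k => by
    rw [hts_def, hts_def]; congr 1; push_cast; ring
  have hintegrand : ∀ᵐ ω ∂μ, exp (-(ε * ∑ k ∈ range m, (α * ‖x + B (ts k) ω‖ ^ 2 - β)))
      = exp (β * ε * m) * ∏ i, exp (-(α * ε) *
          walkSqSum m (x i) (fun k : Fin m => B (ts (k + 1)) ω i - B (ts k) ω i)) := by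
    filter_upwards [hB.ae_eq_zero] with ω hω
    rw [sum_sub_distrib, ← mul_sum, sum_norm_add_sq_eq_sum_walkSqSum x _ (by simpa [hts_def]),
      ← exp_sum, ← exp_add, ← mul_sum, sum_const, card_range, nsmul_eq_mul]
    congr 1
    ring
  simp_rw [← hts_def]
  rw [integral_congr_ae hintegrand, integral_const_mul, hB.integral_prod_increments hts hts0
    (fun i z => exp (-(α * ε) * walkSqSum m (x i) z))
    fun i => (((measurable_walkSqSum m).comp measurable_prodMk_left).const_mul _).exp]
  simp only [hstep, integral_exp_neg_walkSqSum_gaussianReal hα.le hε, ← exp_sum, ← exp_add,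
    EuclideanSpace.real_norm_sq_eq, betaSeq_eq d, sum_add_distrib, ← mul_sum]
  congr 1
  simp only [neg_mul, sum_const, card_univ, Fintype.card_fin, nsmul_eq_mul]
  ring

/-- the Gaussian identity
`E[e^{-ε Σ_{k=0}^{m-1} (α|B^x_{2kε}|² - β)}] = e^{-α_m |x|² + β_m}` for `1 ≤ m ≤ n`. -/
theorem gaussian_expectation_recursion
    [MeasurableSpace Ω] (μ : Measure Ω) [IsProbabilityMeasure μ]
    (B : ℝ → Ω → EuclideanSpace ℝ (Fin d)) (hB : IsBM μ B)
    (x : EuclideanSpace ℝ (Fin d)) (α β ε : ℝ)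
    (hα : 0 < α) (hβ : 0 < β) (hε : 0 < ε) (n : ℕ) :
    ∀ m : ℕ, 1 ≤ m → m ≤ n →
      ∫ ω, Real.exp (-(ε * ∑ k ∈ Finset.range m,
          (α * ‖x + B (2 * (k : ℝ) * ε) ω‖ ^ 2 - β))) ∂μ
        = Real.exp (-(alphaSeq α ε m) * ‖x‖ ^ 2 + betaSeq d α β ε m) :=
  gaussian_expectation_recursion_general μ B hB x α β ε hα hε n

end
end

section
/- Let P_ε be a semigroup with spectral decomposition P_ε f = Σ_m e^{-ε λ_m} ⟨e_m, f⟩ e_m on L²_0(ρ), λ_m ≥ λ_1 > 0. Let φ = Σ_m λ_m^{-1} ⟨h, e_m⟩ e_m be the exact solution and φ̃ = Σ_m (ε/(1 - e^{-ε λ_m})) ⟨h, e_m⟩ e_m the solution of the discrete fixed point φ̃ = P_ε φ̃ + ε(h - ĥ_ρ). Then ‖φ̃ - φ‖²_{L²(ρ)} ≤ ε² ‖h‖²_{L²(ρ)}. -/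
open scoped RealInnerProductSpace

noncomputable section

/-- Key elementary inequality: `|1/(1 - e^{-x}) - 1/x| ≤ 1` for `x > 0`. -/
lemma key_ineq (x : ℝ) (hx : 0 < x) :
    |1 / (1 - Real.exp (-x)) - 1 / x| ≤ 1 := by
  have ht : Real.exp (-x) < 1 := by
    rw [Real.exp_lt_one_iff]; linarith
  have h1 : 0 < 1 - Real.exp (-x) := by linarith
  have h2 : 1 - Real.exp (-x) ≤ x := by
    nlinarith [Real.add_one_le_exp (-x)]
  have h3 : Real.exp (-x) * (1 + x) ≤ 1 := by
    have := mul_le_mul_of_nonneg_left (Real.add_one_le_exp x) (Real.exp_pos (-x)).le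
    rw [← Real.exp_add, neg_add_cancel, Real.exp_zero] at this
    nlinarith
  rw [abs_le]
  constructor
  · have : 1 / x ≤ 1 / (1 - Real.exp (-x)) := one_div_le_one_div_of_le h1 h2
    linarith
  · rw [div_sub_div _ _ h1.ne' hx.ne', div_le_one (by positivity)]
    nlinarith

/-- for the semigroup with spectral decomposition
`P_ε f = Σ_m e^{-ελ_m}⟨e_m,f⟩e_m` on `L²₀(ρ)` (modelled as an abstract Hilbert space
with orthonormal eigenbasis `e`), the exact solution `φ = Σ_m λ_m⁻¹⟨h,e_m⟩e_m` and
the discrete fixed-point solution `φ̃ = Σ_m (ε/(1-e^{-ελ_m}))⟨h,e_m⟩e_m` satisfy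
`‖φ̃ - φ‖² ≤ ε²‖h‖²`. -/
theorem discretization_bias_bound
    {H : Type*} [NormedAddCommGroup H] [InnerProductSpace ℝ H] [CompleteSpace H]
    (e : ℕ → H) (horth : Orthonormal ℝ e)
    (lam : ℕ → ℝ) (lam1 ε : ℝ) (hlam1 : 0 < lam1) (hlam : ∀ m, lam1 ≤ lam m)
    (hε : 0 < ε)
    (h φ φt : H)
    (hcomp : h = ∑' m : ℕ, ⟪e m, h⟫ • e m)
    (hφ : φ = ∑' m : ℕ, ((lam m)⁻¹ * ⟪h, e m⟫) • e m)
    (hφt : φt = ∑' m : ℕ, ((ε / (1 - Real.exp (-(ε * lam m)))) * ⟪h, e m⟫) • e m) :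
    ‖φt - φ‖ ^ 2 ≤ ε ^ 2 * ‖h‖ ^ 2 := by
  -- basic positivity facts
  have hlampos : ∀ m, 0 < lam m := fun m => lt_of_lt_of_le hlam1 (hlam m)
  set a : ℕ → ℝ := fun m => ⟪h, e m⟫ with ha
  set cφ : ℕ → ℝ := fun m => (lam m)⁻¹ * a m with hcφ
  set cφt : ℕ → ℝ := fun m => (ε / (1 - Real.exp (-(ε * lam m)))) * a m with hcφt
  -- Bessel: summability of squared coefficients
  have hsq : Summable (fun m => a m ^ 2) := by
    have := horth.inner_products_summable (x := h)
    simpa [sq_abs, real_inner_comm] using this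
  -- bound on the exponential factor difference
  have hgb : ∀ m, |ε / (1 - Real.exp (-(ε * lam m))) - (lam m)⁻¹| ≤ ε := by
    intro m
    have hx : 0 < ε * lam m := mul_pos hε (hlampos m)
    have hk := key_ineq (ε * lam m) hx
    have heq : ε / (1 - Real.exp (-(ε * lam m))) - (lam m)⁻¹
        = ε * (1 / (1 - Real.exp (-(ε * lam m))) - 1 / (ε * lam m)) := by
      have h1 : 0 < 1 - Real.exp (-(ε * lam m)) := by
        have : Real.exp (-(ε * lam m)) < 1 := by
          rw [Real.exp_lt_one_iff]; linarith
        linarith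
      have h2 : ε / (ε * lam m) = (lam m)⁻¹ := by
        rw [div_mul_eq_div_div, div_self hε.ne', one_div]
      rw [mul_sub, mul_one_div, mul_one_div, h2]
    calc |ε / (1 - Real.exp (-(ε * lam m))) - (lam m)⁻¹|
        = ε * |1 / (1 - Real.exp (-(ε * lam m))) - 1 / (ε * lam m)| := by
          rw [heq, abs_mul, abs_of_pos hε]
      _ ≤ ε * 1 := by exact mul_le_mul_of_nonneg_left hk hε.le
      _ = ε := mul_one ε
  -- bound on the exponential factor itself
  have hftb : ∀ m, |ε / (1 - Real.exp (-(ε * lam m)))| ≤ lam1⁻¹ + ε := by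
    intro m
    have := hgb m
    have hinv : |(lam m)⁻¹| ≤ lam1⁻¹ := by
      rw [abs_of_pos (inv_pos.mpr (hlampos m))]
      exact inv_anti₀ hlam1 (hlam m)
    calc |ε / (1 - Real.exp (-(ε * lam m)))|
        ≤ |(lam m)⁻¹| + |ε / (1 - Real.exp (-(ε * lam m))) - (lam m)⁻¹| := by
          have := abs_sub_abs_le_abs_sub (ε / (1 - Real.exp (-(ε * lam m)))) ((lam m)⁻¹)
          linarith [abs_sub_comm (ε / (1 - Real.exp (-(ε * lam m)))) ((lam m)⁻¹)]
      _ ≤ lam1⁻¹ + ε := add_le_add hinv this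
  -- summability of the coefficient families, hence of the vector families
  have hOF := horth.orthogonalFamily
  have hsummable : ∀ (c : ℕ → ℝ) (C : ℝ), 0 ≤ C → (∀ m, |c m| ≤ C * |a m|) →
      Summable (fun m => c m • e m) := by
    intro c C hC hc
    have h1 : Summable fun m => ‖c m‖ ^ 2 := by
      apply Summable.of_nonneg_of_le (fun m => by positivity)
        (fun m => ?_) (hsq.mul_left (C ^ 2))
      have : |c m| ^ 2 ≤ (C * |a m|) ^ 2 := by
        have := hc m
        nlinarith [abs_nonneg (c m), abs_nonneg (a m)]
      calc ‖c m‖ ^ 2 = |c m| ^ 2 := by rw [Real.norm_eq_abs]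
        _ ≤ (C * |a m|) ^ 2 := this
        _ = C ^ 2 * a m ^ 2 := by rw [mul_pow, sq_abs]
    have := (hOF.summable_iff_norm_sq_summable c).mpr h1
    simpa [LinearIsometry.toSpanSingleton_apply] using this
  have hφsummable : Summable (fun m => cφ m • e m) := by
    apply hsummable cφ lam1⁻¹ (by positivity)
    intro m
    rw [hcφ, abs_mul]
    apply mul_le_mul_of_nonneg_right _ (abs_nonneg (a m))
    rw [abs_of_pos (inv_pos.mpr (hlampos m))]
    exact inv_anti₀ hlam1 (hlam m)
  have hφtsummable : Summable (fun m => cφt m • e m) := by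
    apply hsummable cφt (lam1⁻¹ + ε) (by positivity)
    intro m
    rw [hcφt, abs_mul]
    exact mul_le_mul_of_nonneg_right (hftb m) (abs_nonneg (a m))
  -- HasSum identities
  have hφhs : HasSum (fun m => cφ m • e m) φ := hφ ▸ hφsummable.hasSum
  have hφths : HasSum (fun m => cφt m • e m) φt := hφt ▸ hφtsummable.hasSum
  set c : ℕ → ℝ := fun m => cφt m - cφ m with hc
  have hd : HasSum (fun m => c m • e m) (φt - φ) := by
    simpa [hc, sub_smul] using hφths.sub hφhs
  -- coefficients of the difference
  have hcoef : ∀ n, ⟪e n, φt - φ⟫ = c n := by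
    intro n
    have h1 : HasSum (fun m => ⟪e n, c m • e m⟫) ⟪e n, φt - φ⟫ :=
      hd.mapL (innerSL ℝ (e n))
    have h2 : HasSum (fun m => ⟪e n, c m • e m⟫) (c n) := by
      have : (fun m => ⟪e n, c m • e m⟫) = fun m => if m = n then c n else 0 := by
        funext m
        rw [real_inner_smul_right]
        rcases eq_or_ne m n with rfl | hmn
        · simp [horth.1 m, real_inner_self_eq_norm_sq]
        · simp [horth.2 (Ne.symm hmn), hmn]
      rw [this]
      exact hasSum_ite_eq n (c n)
    exact h1.unique h2
  -- norm squared as a sum of squared coefficients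
  have hnormsq : HasSum (fun m => c m ^ 2) (‖φt - φ‖ ^ 2) := by
    have h1 : HasSum (fun m => ⟪c m • e m, φt - φ⟫) ⟪φt - φ, φt - φ⟫ :=
      hd.mapL ((innerSL ℝ).flip (φt - φ))
    have h2 : (fun m => ⟪c m • e m, φt - φ⟫) = fun m => c m ^ 2 := by
      funext m
      rw [real_inner_smul_left, hcoef m, sq]
    rw [h2, real_inner_self_eq_norm_sq] at h1
    exact h1
  -- final estimate
  have hbound : ∀ m, c m ^ 2 ≤ ε ^ 2 * a m ^ 2 := by
    intro m
    have h1 : |c m| ≤ ε * |a m| := by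
      have : c m = (ε / (1 - Real.exp (-(ε * lam m))) - (lam m)⁻¹) * a m := by
        rw [hc, hcφt, hcφ, sub_mul]
      rw [this, abs_mul]
      exact mul_le_mul_of_nonneg_right (hgb m) (abs_nonneg (a m))
    nlinarith [abs_nonneg (c m), abs_nonneg (a m), sq_abs (c m), sq_abs (a m)]
  calc ‖φt - φ‖ ^ 2 = ∑' m, c m ^ 2 := hnormsq.tsum_eq.symm
    _ ≤ ∑' m, ε ^ 2 * a m ^ 2 :=
        Summable.tsum_le_tsum hbound hnormsq.summable (hsq.mul_left (ε ^ 2))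
    _ = ε ^ 2 * ∑' m, a m ^ 2 := tsum_mul_left
    _ ≤ ε ^ 2 * ‖h‖ ^ 2 := by
        apply mul_le_mul_of_nonneg_left _ (by positivity)
        have := horth.tsum_inner_products_le (x := h)
        simpa [sq_abs, real_inner_comm] using this

end
end

section
/- Let ρ be the d-dimensional Gaussian density N(0, Σ) with Σ = diag(σ_1²,…,σ_d²), and let T_ε be the diffusion map operator T_ε f(x) = ∫ ∏_{j=1}^d (4πε(1-δ_j))^{-1/2} e^{-|y_j - (1-δ_j)x_j|²/(4ε(1-δ_j))} f(y) dy with δ_j = ε(σ_j² + 4ε)/(σ_j⁴ + 3σ_j²ε + 4ε²). Then T_ε has a unique invariant Gaussian density N(0, Σ_ε) with Σ_ε = diag(σ_{ε,1}²,…,σ_{ε,d}²) where σ_{ε,j}² = 2ε(1-δ_j)/(δ_j(2-δ_j)). -/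
open MeasureTheory Finset

noncomputable section

variable {d : ℕ}

open Real

/-!
In each coordinate `T_ε` is the Gaussian transition `y = c x + N(0, a)` with `c = 1 - δ` and
`a = 2ε(1 - δ)`. Completing the square shows that it maps the density `N(0, v)` to
`N(0, a + c² v)`, so by Fubini `∫ T_ε f · ρ_v = ∫ f · ρ_{a + c² v}`. Testing against a Gaussian
in one coordinate shows that a centred diagonal Gaussian is determined by these integrals, so
`ρ_v` is invariant iff `a + c² v = v` coordinatewise, whose only solution is
`v = a / (1 - c²) = 2ε(1 - δ) / (δ(2 - δ))`.
-/

def gaussDensity (v t : ℝ) : ℝ := 1 / √(2 * π * v) * exp (-t ^ 2 / (2 * v))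

theorem gaussDensity_nonneg (v t : ℝ) : 0 ≤ gaussDensity v t := by
  unfold gaussDensity; positivity

theorem continuous_gaussDensity (v : ℝ) : Continuous (gaussDensity v) := by
  unfold gaussDensity; fun_prop

theorem gaussDensity_neg (v t : ℝ) : gaussDensity v (-t) = gaussDensity v t := by
  rw [gaussDensity, neg_sq, gaussDensity]

theorem gaussDensity_zero (v : ℝ) : gaussDensity v 0 = 1 / √(2 * π * v) := by
  simp [gaussDensity]

theorem gaussDensity_le_gaussDensity_zero {v : ℝ} (hv : 0 ≤ v) (t : ℝ) :
    gaussDensity v t ≤ gaussDensity v 0 := by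
  rw [gaussDensity_zero, gaussDensity]
  refine mul_le_of_le_one_right (by positivity) (exp_le_one_iff.2 ?_)
  exact div_nonpos_of_nonpos_of_nonneg (neg_nonpos.2 (sq_nonneg t)) (by positivity)

theorem gaussDensity_zero_inj {v w : ℝ} (hv : 0 < v) (hw : 0 < w) :
    gaussDensity v 0 = gaussDensity w 0 ↔ v = w := by
  rw [gaussDensity_zero, gaussDensity_zero, one_div, one_div, inv_inj,
    sqrt_inj (by positivity) (by positivity), mul_right_inj' (by positivity)]

theorem gaussDensity_eq_mul_exp_neg_mul_sq (v t : ℝ) :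
    gaussDensity v t = 1 / √(2 * π * v) * exp (-(1 / (2 * v)) * t ^ 2) := by
  rw [gaussDensity]; ring_nf

theorem integrable_gaussDensity {v : ℝ} (hv : 0 < v) : Integrable (gaussDensity v) := by
  simp_rw [funext (gaussDensity_eq_mul_exp_neg_mul_sq v)]
  exact (integrable_exp_neg_mul_sq (by positivity)).const_mul _

theorem integral_gaussDensity {v : ℝ} (hv : 0 < v) : ∫ t, gaussDensity v t = 1 := by
  simp_rw [gaussDensity_eq_mul_exp_neg_mul_sq v]
  rw [integral_const_mul, integral_gaussian, one_div, ← sqrt_inv, ← sqrt_mul (by positivity)]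
  rw [show (2 * π * v)⁻¹ * (π / (1 / (2 * v))) = 1 by field_simp, sqrt_one]

theorem integral_gaussDensity_sub {v : ℝ} (hv : 0 < v) (m : ℝ) :
    ∫ t, gaussDensity v (t - m) = 1 := by
  rw [integral_sub_right_eq_self (gaussDensity v) m, integral_gaussDensity hv]

theorem gaussDensity_mul_gaussDensity {a b : ℝ} (ha : 0 < a) (hb : 0 < b) (c x y : ℝ) :
    gaussDensity a (y - c * x) * gaussDensity b x =
      gaussDensity (a + c ^ 2 * b) y *
        gaussDensity (a * b / (a + c ^ 2 * b)) (x - c * b * y / (a + c ^ 2 * b)) := by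
  have hs : 0 < a + c ^ 2 * b := by positivity
  simp only [gaussDensity]
  rw [mul_mul_mul_comm, mul_mul_mul_comm (1 / √(2 * π * (a + c ^ 2 * b))), ← exp_add, ← exp_add,
    div_mul_div_comm, div_mul_div_comm, ← sqrt_mul (by positivity), ← sqrt_mul (by positivity)]
  congr 1
  · congr 2
    field_simp
  · congr 1
    field_simp
    ring

theorem integral_gaussDensity_sub_mul_mul {a b : ℝ} (ha : 0 < a) (hb : 0 < b) (c y : ℝ) :
    ∫ x, gaussDensity a (y - c * x) * gaussDensity b x = gaussDensity (a + c ^ 2 * b) y := by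
  simp_rw [gaussDensity_mul_gaussDensity ha hb]
  rw [integral_const_mul, integral_gaussDensity_sub (by positivity), mul_one]

section EuclideanSpace

variable {ι : Type*} [Fintype ι]

theorem integral_euclideanSpace_prod (F : ι → ℝ → ℝ) :
    ∫ x : EuclideanSpace ℝ ι, ∏ j, F j (x j) = ∏ j, ∫ t, F j t := by
  rw [← (PiLp.volume_preserving_toLp ι).integral_comp
    (MeasurableEquiv.toLp 2 (ι → ℝ)).measurableEmbedding]
  exact integral_fintype_prod_eq_prod F

theorem integrable_euclideanSpace_prod {F : ι → ℝ → ℝ} (hF : ∀ j, Integrable (F j)) :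
    Integrable fun x : EuclideanSpace ℝ ι => ∏ j, F j (x j) := by
  rw [← (PiLp.volume_preserving_toLp ι).integrable_comp_emb
    (MeasurableEquiv.toLp 2 (ι → ℝ)).measurableEmbedding]
  exact Integrable.fintype_prod hF

def gaussProdDensity (v : ι → ℝ) (x : EuclideanSpace ℝ ι) : ℝ := ∏ j, gaussDensity (v j) (x j)

def gaussKernel (a c : ι → ℝ) (x y : EuclideanSpace ℝ ι) : ℝ :=
  ∏ j, gaussDensity (a j) (y j - c j * x j)

theorem gaussProdDensity_nonneg (v : ι → ℝ) (x : EuclideanSpace ℝ ι) :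
    0 ≤ gaussProdDensity v x :=
  prod_nonneg fun _ _ => gaussDensity_nonneg _ _

theorem gaussKernel_nonneg (a c : ι → ℝ) (x y : EuclideanSpace ℝ ι) : 0 ≤ gaussKernel a c x y :=
  prod_nonneg fun _ _ => gaussDensity_nonneg _ _

theorem continuous_gaussProdDensity (v : ι → ℝ) : Continuous (gaussProdDensity v) :=
  continuous_finsetProd _ fun j _ =>
    (continuous_gaussDensity _).comp (EuclideanSpace.proj (𝕜 := ℝ) j).continuous

theorem continuous_gaussKernel (a c : ι → ℝ) :
    Continuous fun p : EuclideanSpace ℝ ι × EuclideanSpace ℝ ι => gaussKernel a c p.1 p.2 := by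
  refine continuous_finsetProd _ fun j _ => (continuous_gaussDensity _).comp ?_
  have hj := (EuclideanSpace.proj (𝕜 := ℝ) (ι := ι) j).continuous
  exact (hj.comp continuous_snd).sub (continuous_const.mul (hj.comp continuous_fst))

theorem integrable_gaussProdDensity {v : ι → ℝ} (hv : ∀ j, 0 < v j) :
    Integrable (gaussProdDensity v) :=
  integrable_euclideanSpace_prod fun j => integrable_gaussDensity (hv j)

theorem integrable_gaussKernel {a : ι → ℝ} (ha : ∀ j, 0 < a j) (c : ι → ℝ)
    (x : EuclideanSpace ℝ ι) :
    Integrable (gaussKernel a c x) :=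
  integrable_euclideanSpace_prod fun j => (integrable_gaussDensity (ha j)).comp_sub_right _

theorem integral_gaussKernel {a : ι → ℝ} (ha : ∀ j, 0 < a j) (c : ι → ℝ)
    (x : EuclideanSpace ℝ ι) :
    ∫ y, gaussKernel a c x y = 1 := by
  unfold gaussKernel
  rw [integral_euclideanSpace_prod fun j t => gaussDensity (a j) (t - c j * x j)]
  exact prod_eq_one fun j _ => integral_gaussDensity_sub (ha j) _

theorem integral_gaussKernel_mul_gaussProdDensity {a v : ι → ℝ} (ha : ∀ j, 0 < a j)
    (hv : ∀ j, 0 < v j) (c : ι → ℝ) (y : EuclideanSpace ℝ ι) :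
    ∫ x, gaussKernel a c x y * gaussProdDensity v x =
      gaussProdDensity (fun j => a j + c j ^ 2 * v j) y := by
  simp_rw [gaussKernel, gaussProdDensity, ← prod_mul_distrib]
  rw [integral_euclideanSpace_prod fun j t =>
    gaussDensity (a j) (y j - c j * t) * gaussDensity (v j) t]
  exact prod_congr rfl fun j _ => integral_gaussDensity_sub_mul_mul (ha j) (hv j) _ _

theorem integral_apply_mul_gaussProdDensity {v : ι → ℝ} (hv : ∀ j, 0 < v j) (g : ℝ → ℝ)
    (i : ι) :
    ∫ x, g (x i) * gaussProdDensity v x = ∫ t, g t * gaussDensity (v i) t := by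
  classical
  have hsplit : ∀ x : EuclideanSpace ℝ ι, g (x i) * gaussProdDensity v x =
      ∏ j, (if j = i then g (x j) else 1) * gaussDensity (v j) (x j) := by
    intro x
    rw [prod_mul_distrib, prod_ite_eq']
    simp [gaussProdDensity]
  simp_rw [hsplit]
  rw [integral_euclideanSpace_prod fun j t => (if j = i then g t else 1) * gaussDensity (v j) t,
    Fintype.prod_eq_single i fun j hj => by simp [hj, integral_gaussDensity (hv j)]]
  simp

theorem integrable_gaussKernel_mul_gaussProdDensity {a v : ι → ℝ} (ha : ∀ j, 0 < a j)
    (hv : ∀ j, 0 < v j) (c : ι → ℝ) :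
    Integrable (fun p : EuclideanSpace ℝ ι × EuclideanSpace ℝ ι =>
      gaussKernel a c p.1 p.2 * gaussProdDensity v p.1) (volume.prod volume) := by
  have hcont : Continuous fun p : EuclideanSpace ℝ ι × EuclideanSpace ℝ ι =>
      gaussKernel a c p.1 p.2 * gaussProdDensity v p.1 :=
    (continuous_gaussKernel a c).mul ((continuous_gaussProdDensity v).comp continuous_fst)
  refine (integrable_prod_iff hcont.aestronglyMeasurable).2
    ⟨.of_forall fun x => (integrable_gaussKernel ha c x).mul_const (gaussProdDensity v x), ?_⟩
  refine (integrable_gaussProdDensity hv).congr (.of_forall fun x => ?_)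
  simp_rw [norm_of_nonneg (mul_nonneg (gaussKernel_nonneg a c x _) (gaussProdDensity_nonneg v x)),
    integral_mul_const, integral_gaussKernel ha c x, one_mul]

theorem integral_integral_gaussKernel_mul {a v : ι → ℝ} (ha : ∀ j, 0 < a j) (hv : ∀ j, 0 < v j)
    (c : ι → ℝ) {f : EuclideanSpace ℝ ι → ℝ} (hf : AEStronglyMeasurable f) {C : ℝ}
    (hC : ∀ y, |f y| ≤ C) :
    ∫ x, (∫ y, gaussKernel a c x y * f y) * gaussProdDensity v x =
      ∫ y, f y * gaussProdDensity (fun j => a j + c j ^ 2 * v j) y := by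
  have hint : Integrable (fun p : EuclideanSpace ℝ ι × EuclideanSpace ℝ ι =>
      f p.2 * (gaussKernel a c p.1 p.2 * gaussProdDensity v p.1)) (volume.prod volume) :=
    (integrable_gaussKernel_mul_gaussProdDensity ha hv c).bdd_mul hf.comp_snd
      (.of_forall fun p => hC p.2)
  calc ∫ x, (∫ y, gaussKernel a c x y * f y) * gaussProdDensity v x
      = ∫ x, ∫ y, f y * (gaussKernel a c x y * gaussProdDensity v x) := by
        congr 1 with x
        rw [← integral_mul_const]
        congr 1 with y
        ring
    _ = ∫ y, ∫ x, f y * (gaussKernel a c x y * gaussProdDensity v x) :=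
        integral_integral_swap hint
    _ = ∫ y, f y * gaussProdDensity (fun j => a j + c j ^ 2 * v j) y := by
        congr 1 with y
        rw [integral_const_mul, integral_gaussKernel_mul_gaussProdDensity ha hv]

theorem eq_of_integral_mul_gaussProdDensity_eq {v w : ι → ℝ} (hv : ∀ j, 0 < v j)
    (hw : ∀ j, 0 < w j)
    (h : ∀ f : EuclideanSpace ℝ ι → ℝ, Continuous f → (∃ C, ∀ x, |f x| ≤ C) →
      ∫ x, f x * gaussProdDensity v x = ∫ x, f x * gaussProdDensity w x) :
    v = w := by
  funext i
  have hmarginal : ∀ u : ι → ℝ, (∀ j, 0 < u j) →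
      ∫ x, gaussDensity 1 (x i) * gaussProdDensity u x = gaussDensity (1 + u i) 0 := by
    intro u hu
    rw [integral_apply_mul_gaussProdDensity hu]
    simpa only [zero_sub, one_mul, one_pow, gaussDensity_neg] using
      integral_gaussDensity_sub_mul_mul one_pos (hu i) 1 0
  have htest := h (fun x => gaussDensity 1 (x i))
    ((continuous_gaussDensity 1).comp (EuclideanSpace.proj (𝕜 := ℝ) i).continuous)
    ⟨gaussDensity 1 0, fun x => by
      rw [abs_of_nonneg (gaussDensity_nonneg _ _)]
      exact gaussDensity_le_gaussDensity_zero zero_le_one _⟩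
  rw [hmarginal v hv, hmarginal w hw,
    gaussDensity_zero_inj (by linarith [hv i]) (by linarith [hw i])] at htest
  linarith

end EuclideanSpace

/-- for the Gaussian density `N(0, Σ)` with
`Σ = diag(σ₁²,…,σ_d²)`, the diffusion map operator `T_ε` (given by the explicit
product-Gaussian kernel with `δ_j = ε(σ_j² + 4ε)/(σ_j⁴ + 3σ_j²ε + 4ε²)`) has a
unique invariant Gaussian density `N(0, Σ_ε)` with
`Σ_ε = diag(σ_{ε,j}²)`, `σ_{ε,j}² = 2ε(1-δ_j)/(δ_j(2-δ_j))`. -/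
theorem diffusion_map_gaussian_invariant_density
    (σ : Fin d → ℝ) (hσ : ∀ j, 0 < σ j) (ε : ℝ) (hε : 0 < ε)
    (δ : Fin d → ℝ)
    (hδ : ∀ j, δ j = ε * ((σ j) ^ 2 + 4 * ε) /
        ((σ j) ^ 4 + 3 * (σ j) ^ 2 * ε + 4 * ε ^ 2))
    (Tε : (EuclideanSpace ℝ (Fin d) → ℝ) → EuclideanSpace ℝ (Fin d) → ℝ)
    (hT : ∀ f x, Tε f x = ∫ y : EuclideanSpace ℝ (Fin d),
        (∏ j, (1 / Real.sqrt (4 * Real.pi * ε * (1 - δ j))) *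
          Real.exp (-(y j - (1 - δ j) * x j) ^ 2 / (4 * ε * (1 - δ j)))) * f y)
    (σε2 : Fin d → ℝ) (hσε2 : ∀ j, σε2 j = 2 * ε * (1 - δ j) / (δ j * (2 - δ j)))
    (ρε : EuclideanSpace ℝ (Fin d) → ℝ)
    (hρε : ∀ x, ρε x = ∏ j, (1 / Real.sqrt (2 * Real.pi * σε2 j)) *
        Real.exp (-(x j) ^ 2 / (2 * σε2 j))) :
    -- invariance of `N(0, Σ_ε)`:
    (∀ f : EuclideanSpace ℝ (Fin d) → ℝ, Continuous f → (∃ C, ∀ x, |f x| ≤ C) →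
      ∫ x, Tε f x * ρε x = ∫ x, f x * ρε x) ∧
    -- uniqueness among (centered, diagonal) Gaussian densities:
    (∀ v : Fin d → ℝ, (∀ j, 0 < v j) →
      (∀ f : EuclideanSpace ℝ (Fin d) → ℝ, Continuous f → (∃ C, ∀ x, |f x| ≤ C) →
        ∫ x, Tε f x * (∏ j, (1 / Real.sqrt (2 * Real.pi * v j)) *
            Real.exp (-(x j) ^ 2 / (2 * v j)))
          = ∫ x, f x * (∏ j, (1 / Real.sqrt (2 * Real.pi * v j)) *
            Real.exp (-(x j) ^ 2 / (2 * v j)))) →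
      v = σε2) := by
  set a : Fin d → ℝ := fun j => 2 * ε * (1 - δ j)
  set c : Fin d → ℝ := fun j => 1 - δ j
  have hδ_mem : ∀ j, 0 < δ j ∧ δ j < 1 := fun j => by
    have hσj := hσ j
    rw [hδ j, div_lt_one (by positivity)]
    exact ⟨by positivity, by nlinarith [pow_pos hσj 4, mul_pos (pow_pos hσj 2) hε]⟩
  have ha : ∀ j, 0 < a j := fun j => mul_pos (by positivity) (by linarith [hδ_mem j])
  have hσε2_pos : ∀ j, 0 < σε2 j := fun j => by
    rw [hσε2 j]
    exact div_pos (ha j) (mul_pos (hδ_mem j).1 (by linarith [hδ_mem j]))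
  have hfix : ∀ w : Fin d → ℝ, (fun j => a j + c j ^ 2 * w j) = w ↔ w = σε2 := by
    intro w
    simp only [funext_iff]
    refine forall_congr' fun j => ?_
    rw [hσε2 j, eq_div_iff (mul_pos (hδ_mem j).1 (by linarith [hδ_mem j])).ne']
    constructor <;> intro h <;> linear_combination -h
  have hTε : ∀ f x, Tε f x = ∫ y, gaussKernel a c x y * f y := fun f x => by
    rw [hT f x]
    congr 1 with y
    congr 1
    refine prod_congr rfl fun j _ => ?_
    simp only [gaussDensity, a, c]
    ring_nf
  have hρε' : ρε = gaussProdDensity σε2 := funext hρε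
  refine ⟨fun f hf ⟨C, hC⟩ => ?_, fun v hv hinv => ?_⟩
  · simp only [hTε, hρε']
    rw [integral_integral_gaussKernel_mul ha hσε2_pos c hf.aestronglyMeasurable hC,
      (hfix σε2).2 rfl]
  · refine (hfix v).1 (eq_of_integral_mul_gaussProdDensity_eq
      (fun j => add_pos_of_pos_of_nonneg (ha j) (mul_nonneg (sq_nonneg _) (hv j).le)) hv
      fun f hf ⟨C, hC⟩ => ?_)
    rw [← integral_integral_gaussKernel_mul ha hv c hf.aestronglyMeasurable hC]
    simpa only [hTε, gaussProdDensity, gaussDensity] using hinv f hf ⟨C, hC⟩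

end
end
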